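/- For two disjoint closed triangles T₁, T₂ ⊆ ℝ³ (as convex hulls of three points each), the minimum distance dist(T₁,T₂) is attained either between a vertex of one triangle and a point of the other triangle, or between a point on an edge of T₁ and a point on an edge of T₂. -/

import Mathlib

open Set

set_option maxHeartbeats 1000000

namespace Stmt6Aux

noncomputable abbrev E3 := EuclideanSpace ℝ (Fin 3)

lemma tri_mem_iff (u0 u1 u2 x : E3) :
    x ∈ convexHull ℝ ({u0,u1,u2} : Set E3) ↔
    ∃ a b c : ℝ, 0 ≤ a ∧ 0 ≤ b ∧ 0 ≤ c ∧ a+b+c = 1 ∧ x = a•u0+b•u1+c•u2 := by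
  rw [show ({u0,u1,u2} : Set E3) = insert u0 {u1,u2} from rfl,
    convexHull_insert ⟨u1, by simp⟩, mem_convexJoin]
  simp only [convexHull_pair, mem_singleton_iff]
  constructor
  · rintro ⟨a', rfl, z, ⟨b', c', hb', hc', hbc', rfl⟩, a, d, ha, hd, had, rfl⟩
    exact ⟨a, d*b', d*c', ha, by positivity, by positivity, by nlinarith, by module⟩
  · rintro ⟨a, b, c, ha, hb, hc, habc, rfl⟩
    rcases eq_or_lt_of_le (by positivity : (0:ℝ) ≤ b + c) with h | h
    · refine ⟨u0, rfl, u1, left_mem_segment ℝ u1 u2, a, 0, ha, le_refl _, by linarith, ?_⟩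
      have hb0 : b = 0 := by linarith
      have hc0 : c = 0 := by linarith
      have ha1 : a = 1 := by linarith
      simp [hb0, hc0, ha1]
    · refine ⟨u0, rfl, (b/(b+c))•u1 + (c/(b+c))•u2,
        ⟨b/(b+c), c/(b+c), by positivity, by positivity, by field_simp, rfl⟩,
        a, b+c, ha, le_of_lt h, by linarith, ?_⟩
      rw [smul_add, smul_smul, smul_smul,
        mul_div_cancel₀ _ (ne_of_gt h), mul_div_cancel₀ _ (ne_of_gt h)]
      abel

lemma inner_eq_zero_of_min (x y v : E3) (ε : ℝ) (hε : 0 < ε)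
    (h : ∀ t : ℝ, |t| ≤ ε → ‖x - y‖ ≤ ‖x + t•v - y‖) :
    inner ℝ v (x - y) = (0:ℝ) := by
  set c : ℝ := inner ℝ v (x - y) with hc
  by_contra hc0
  have habs0 : (0:ℝ) < |c| := abs_pos.2 hc0
  set δ : ℝ := min ε (|c| / (‖v‖^2 + 1)) with hδ
  have hδpos : 0 < δ := lt_min hε (by positivity)
  have hmin : δ * (‖v‖^2 + 1) ≤ |c| := by
    rw [← le_div_iff₀ (by positivity)]
    exact min_le_right _ _
  set t : ℝ := -δ * (c / |c|) with ht
  have habs : |t| = δ := by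
    rw [ht, abs_mul, abs_neg, abs_div, abs_abs, div_self (ne_of_gt habs0),
      abs_of_pos hδpos, mul_one]
  have hle := h t (by rw [habs]; exact min_le_left _ _)
  have hsq : ‖x - y‖^2 ≤ ‖x + t•v - y‖^2 := by
    apply sq_le_sq' _ hle
    linarith [norm_nonneg (x - y), norm_nonneg (x + t•v - y)]
  have hexp : ‖x + t•v - y‖^2 = ‖x - y‖^2 + 2 * (t * c) + t^2 * ‖v‖^2 := by
    have he : x + t•v - y = (x - y) + t•v := by abel
    rw [he, norm_add_sq_real, real_inner_smul_right, real_inner_comm, ← hc,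
      norm_smul, mul_pow]
    simp [sq_abs]
  have htc : t * c = -(δ * |c|) := by
    rw [ht, mul_assoc, div_mul_eq_mul_div, ← abs_mul_abs_self c, mul_div_assoc,
      div_self (ne_of_gt habs0), mul_one, neg_mul]
  have ht2 : t^2 = δ^2 := by rw [← sq_abs, habs]
  rw [hexp, htc, ht2] at hsq
  nlinarith [mul_le_mul_of_nonneg_left hmin hδpos.le, hδpos, habs0]

lemma tri_perturb (u0 u1 u2 x : E3) (a b c : ℝ) (ha : 0 < a) (hb : 0 < b) (hc : 0 < c)
    (habc : a+b+c = 1) (hx : x = a•u0+b•u1+c•u2) (s r : ℝ) (v : E3)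
    (hv : v = s•(u1-u0)+r•(u2-u0)) :
    ∃ ε > 0, ∀ t : ℝ, |t| ≤ ε →
      x + t•v ∈ convexHull ℝ ({u0,u1,u2} : Set E3) := by
  subst hv
  set K := |s| + |r| + 1 with hK
  have hK0 : (0:ℝ) < K := by positivity
  refine ⟨min a (min b c) / K, by positivity, fun t ht => ?_⟩
  have h1 : |t| * K ≤ min a (min b c) := by
    rw [← le_div_iff₀ hK0]; exact ht
  have hs' : |t*s| ≤ |t| * K := by
    rw [abs_mul]
    exact mul_le_mul_of_nonneg_left (by rw [hK]; linarith [abs_nonneg r]) (abs_nonneg t)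
  have hr' : |t*r| ≤ |t| * K := by
    rw [abs_mul]
    exact mul_le_mul_of_nonneg_left (by rw [hK]; linarith [abs_nonneg s]) (abs_nonneg t)
  have hma : min a (min b c) ≤ a := min_le_left _ _
  have hmb : min a (min b c) ≤ b := le_trans (min_le_right _ _) (min_le_left _ _)
  have hmc : min a (min b c) ≤ c := le_trans (min_le_right _ _) (min_le_right _ _)
  rw [tri_mem_iff]
  refine ⟨a - t*s - t*r, b + t*s, c + t*r, ?_, ?_, ?_, by linear_combination habc, ?_⟩
  · have hsum : |t*s| + |t*r| ≤ |t| * K := by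
      rw [abs_mul, abs_mul, ← mul_add]
      exact mul_le_mul_of_nonneg_left (by rw [hK]; linarith) (abs_nonneg t)
    linarith [le_abs_self (t*s), le_abs_self (t*r)]
  · linarith [neg_abs_le (t*s)]
  · linarith [neg_abs_le (t*r)]
  · rw [hx]; module

lemma seg_perturb (p q y : E3) (b c : ℝ) (hb : 0 < b) (hc : 0 < c) (hbc : b+c = 1)
    (hy : y = b•p+c•q) :
    ∃ ε > 0, ∀ t : ℝ, |t| ≤ ε → y + t•(q-p) ∈ convexHull ℝ ({p,q} : Set E3) := by
  refine ⟨min b c, lt_min hb hc, fun t ht => ?_⟩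
  rw [convexHull_pair]
  refine ⟨b - t, c + t, ?_, ?_, by linarith, ?_⟩
  · linarith [(abs_le.1 ht).2, min_le_left b c]
  · linarith [(abs_le.1 ht).1, min_le_right b c]
  · rw [hy]; module

lemma span_pair_eq_orth (a b n : E3) (hn : n ≠ 0)
    (hli : LinearIndependent ℝ ![a, b])
    (h1 : inner ℝ a n = (0:ℝ)) (h2 : inner ℝ b n = (0:ℝ)) :
    Submodule.span ℝ {a, b} = (ℝ ∙ n)ᗮ := by
  have h3 : Module.finrank ℝ E3 = 2 + 1 := by simp
  haveI := Fact.mk h3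
  apply Submodule.eq_of_le_of_finrank_eq
  · rw [Submodule.span_le]
    rintro z (rfl | rfl)
    · exact (Submodule.mem_orthogonal_singleton_iff_inner_right).2
        (by rw [real_inner_comm]; exact h1)
    · exact (Submodule.mem_orthogonal_singleton_iff_inner_right).2
        (by rw [real_inner_comm]; exact h2)
  · rw [Submodule.finrank_orthogonal_span_singleton (n := 2) hn]
    have hr : ({a, b} : Set E3) = Set.range ![a, b] := by
      ext z; simp [Matrix.range_cons, Matrix.range_empty]; tauto
    rw [hr, finrank_span_eq_card hli]
    simp

lemma li_of_affInd (u0 u1 u2 : E3) (hu : AffineIndependent ℝ ![u0, u1, u2]) :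
    LinearIndependent ℝ ![u1 - u0, u2 - u0] := by
  have h := (affineIndependent_iff_linearIndependent_vsub ℝ ![u0,u1,u2] 0).1 hu
  let f : Fin 2 → {x : Fin 3 // x ≠ 0} := ![⟨1, by decide⟩, ⟨2, by decide⟩]
  have hf : Function.Injective f := by decide
  have h2 := h.comp f hf
  have he : (fun i : {x : Fin 3 // x ≠ 0} => ![u0,u1,u2] ↑i -ᵥ ![u0,u1,u2] 0) ∘ f
      = ![u1 - u0, u2 - u0] := by
    funext i
    fin_cases i <;> simp [f]
  rwa [he] at h2

lemma vertex_ne (u0 u1 u2 : E3) (hu : AffineIndependent ℝ ![u0, u1, u2]) :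
    u0 ≠ u1 ∧ u1 ≠ u2 ∧ u0 ≠ u2 := by
  have h := hu.injective
  refine ⟨fun he => ?_, fun he => ?_, fun he => ?_⟩
  · have : (0 : Fin 3) = 1 := h (by simpa using he)
    simp at this
  · have : (1 : Fin 3) = 2 := h (by simpa using he)
    simp at this
  · have : (0 : Fin 3) = 2 := h (by simpa using he)
    simp at this

end Stmt6Aux

open Stmt6Aux

/-- For two disjoint closed triangles in ℝ³ (convex hulls of three affinely independent
points each), the minimum distance is attained either between a vertex of one triangle
and a point of the other, or between a point on an edge of T₁ and a point on an edge
of T₂. -/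
theorem stmt_6 (u0 u1 u2 w0 w1 w2 : EuclideanSpace ℝ (Fin 3))
    (hu : AffineIndependent ℝ ![u0, u1, u2]) (hw : AffineIndependent ℝ ![w0, w1, w2])
    (T1 T2 : Set (EuclideanSpace ℝ (Fin 3)))
    (hT1 : T1 = convexHull ℝ {u0, u1, u2}) (hT2 : T2 = convexHull ℝ {w0, w1, w2})
    (hdisj : T1 ∩ T2 = ∅) :
    ∃ x ∈ T1, ∃ y ∈ T2,
      dist x y = sInf {d : ℝ | ∃ a ∈ T1, ∃ b ∈ T2, d = dist a b} ∧
      ((x ∈ ({u0, u1, u2} : Set (EuclideanSpace ℝ (Fin 3))) ∨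
        y ∈ ({w0, w1, w2} : Set (EuclideanSpace ℝ (Fin 3)))) ∨
       ((x ∈ convexHull ℝ {u0, u1} ∨ x ∈ convexHull ℝ {u1, u2} ∨ x ∈ convexHull ℝ {u0, u2}) ∧
        (y ∈ convexHull ℝ {w0, w1} ∨ y ∈ convexHull ℝ {w1, w2} ∨ y ∈ convexHull ℝ {w0, w2}))) := by
  have hT1c : IsCompact T1 := hT1 ▸ (Set.toFinite _).isCompact_convexHull ℝ
  have hT2c : IsCompact T2 := hT2 ▸ (Set.toFinite _).isCompact_convexHull ℝ
  have hT1conv : Convex ℝ T1 := hT1 ▸ convex_convexHull ℝ _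
  have hT2conv : Convex ℝ T2 := hT2 ▸ convex_convexHull ℝ _
  have hT1ne : T1.Nonempty := ⟨u0, hT1 ▸ subset_convexHull ℝ _ (by simp)⟩
  have hT2ne : T2.Nonempty := ⟨w0, hT2 ▸ subset_convexHull ℝ _ (by simp)⟩
  set K : Set (E3 × E3) := T1 ×ˢ T2 with hKdef
  have hKc : IsCompact K := hT1c.prod hT2c
  have hKne : K.Nonempty := hT1ne.prod hT2ne
  have hKconv : Convex ℝ K := hT1conv.prod hT2conv
  set f : E3 × E3 → ℝ := fun p => dist p.1 p.2 with hf
  have hfc : Continuous f := continuous_dist.comp (continuous_fst.prodMk continuous_snd)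
  obtain ⟨p, hpK, hpmin⟩ := hKc.exists_isMinOn hKne hfc.continuousOn
  set m : ℝ := f p with hm
  have hmin : ∀ a ∈ T1, ∀ b ∈ T2, m ≤ dist a b := fun a ha b hb =>
    isMinOn_iff.1 hpmin (a,b) (Set.mk_mem_prod ha hb)
  have hfconv : ConvexOn ℝ (univ : Set (E3 × E3)) f := by
    have h := convexOn_univ_norm.comp_affineMap
      ((LinearMap.fst ℝ E3 E3 - LinearMap.snd ℝ E3 E3).toAffineMap)
    simpa [Function.comp_def, dist_eq_norm, hf] using h
  set M : Set (E3 × E3) := {q ∈ K | f q ≤ m} with hM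
  have hMconv : Convex ℝ M := by
    have := (hfconv.subset (subset_univ K) hKconv).convex_le m
    simpa [hM] using this
  have hMc : IsCompact M := hKc.inter_right (isClosed_le hfc continuous_const)
  have hMne : M.Nonempty := ⟨p, hpK, le_refl _⟩
  obtain ⟨q, hq⟩ := hMc.extremePoints_nonempty hMne
  rw [mem_extremePoints] at hq
  obtain ⟨⟨hqK, hqle⟩, hqext⟩ := hq
  have hqm : f q = m := le_antisymm hqle (isMinOn_iff.1 hpmin q hqK)
  have hxT1 : q.1 ∈ T1 := hqK.1
  have hyT2 : q.2 ∈ T2 := hqK.2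
  -- distance to sInf
  have hdisteq : dist q.1 q.2 = sInf {d : ℝ | ∃ a ∈ T1, ∃ b ∈ T2, d = dist a b} := by
    have hSm : m ∈ {d : ℝ | ∃ a ∈ T1, ∃ b ∈ T2, d = dist a b} :=
      ⟨q.1, hxT1, q.2, hyT2, hqm.symm⟩
    have hSlb : ∀ d ∈ {d : ℝ | ∃ a ∈ T1, ∃ b ∈ T2, d = dist a b}, m ≤ d := by
      rintro d ⟨a, ha, b, hb, rfl⟩; exact hmin a ha b hb
    have : sInf {d : ℝ | ∃ a ∈ T1, ∃ b ∈ T2, d = dist a b} = m :=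
      le_antisymm (csInf_le ⟨m, hSlb⟩ hSm) (le_csInf ⟨m, hSm⟩ hSlb)
    rw [this]; exact hqm
  -- x ≠ y
  have hxy : q.1 ≠ q.2 := by
    intro h
    have : q.1 ∈ T1 ∩ T2 := ⟨hxT1, h ▸ hyT2⟩
    rw [hdisj] at this; exact this
  have hd0 : q.1 - q.2 ≠ 0 := sub_ne_zero.2 hxy
  -- extremality: no simultaneous perturbation
  have key : ∀ v : E3, v ≠ 0 →
      (∃ ε > 0, ∀ t : ℝ, |t| ≤ ε → q.1 + t•v ∈ T1) →
      (∃ ε > 0, ∀ t : ℝ, |t| ≤ ε → q.2 + t•v ∈ T2) → False := by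
    rintro v hv ⟨ε1, hε1, h1⟩ ⟨ε2, hε2, h2⟩
    set ε := min ε1 ε2 with hε
    have hεpos : 0 < ε := lt_min hε1 hε2
    have habs1 : |ε| ≤ ε1 := by rw [abs_of_pos hεpos]; exact min_le_left _ _
    have habs2 : |ε| ≤ ε2 := by rw [abs_of_pos hεpos]; exact min_le_right _ _
    have habs1' : |(-ε)| ≤ ε1 := by rwa [abs_neg]
    have habs2' : |(-ε)| ≤ ε2 := by rwa [abs_neg]
    have hdistsame : ∀ t : ℝ, dist (q.1 + t•v) (q.2 + t•v) = m := by
      intro t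
      rw [dist_eq_norm, show q.1 + t•v - (q.2 + t•v) = q.1 - q.2 by abel,
        ← dist_eq_norm]
      exact hqm
    have hq1M : (q.1 + ε•v, q.2 + ε•v) ∈ M :=
      ⟨Set.mk_mem_prod (h1 ε habs1) (h2 ε habs2), le_of_eq (hdistsame ε)⟩
    have hq2M : (q.1 + (-ε)•v, q.2 + (-ε)•v) ∈ M :=
      ⟨Set.mk_mem_prod (h1 (-ε) habs1') (h2 (-ε) habs2'), le_of_eq (hdistsame (-ε))⟩
    have hseg : q ∈ openSegment ℝ (q.1 + ε•v, q.2 + ε•v) (q.1 + (-ε)•v, q.2 + (-ε)•v) := by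
      refine ⟨1/2, 1/2, by norm_num, by norm_num, by norm_num, ?_⟩
      apply Prod.ext <;> simp only [Prod.smul_mk, Prod.mk_add_mk] <;> module
    obtain ⟨heq, -⟩ := hqext _ hq1M _ hq2M hseg
    have : ε • v = 0 := by
      have := congrArg Prod.fst heq
      simpa using this
    rcases smul_eq_zero.1 this with h | h
    · exact absurd h (ne_of_gt hεpos)
    · exact hv h
  -- orthogonality from minimality
  have orth1 : ∀ v : E3, (∃ ε > 0, ∀ t : ℝ, |t| ≤ ε → q.1 + t•v ∈ T1) →
      inner ℝ v (q.1 - q.2) = (0:ℝ) := by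
    rintro v ⟨ε, hε, h⟩
    refine inner_eq_zero_of_min q.1 q.2 v ε hε fun t ht => ?_
    have h2 := hmin (q.1 + t•v) (h t ht) q.2 hyT2
    rw [dist_eq_norm] at h2
    calc ‖q.1 - q.2‖ = dist q.1 q.2 := (dist_eq_norm _ _).symm
      _ = m := hqm
      _ ≤ _ := h2
  have orth2 : ∀ v : E3, (∃ ε > 0, ∀ t : ℝ, |t| ≤ ε → q.2 + t•v ∈ T2) →
      inner ℝ v (q.1 - q.2) = (0:ℝ) := by
    rintro v ⟨ε, hε, h⟩
    have h0 : inner ℝ v (q.2 - q.1) = (0:ℝ) := by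
      refine inner_eq_zero_of_min q.2 q.1 v ε hε fun t ht => ?_
      have h2 := hmin q.1 hxT1 (q.2 + t•v) (h t ht)
      rw [dist_eq_norm, norm_sub_rev] at h2
      calc ‖q.2 - q.1‖ = ‖q.1 - q.2‖ := norm_sub_rev _ _
        _ = dist q.1 q.2 := (dist_eq_norm _ _).symm
        _ = m := hqm
        _ ≤ _ := h2
    rw [show q.1 - q.2 = -(q.2 - q.1) by abel, inner_neg_right, h0, neg_zero]
  -- case analysis on the position of q.1
  obtain ⟨a0, a1, a2, ha0, ha1, ha2, hasum, haeq⟩ := (tri_mem_iff u0 u1 u2 q.1).1 (hT1 ▸ hxT1)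
  obtain ⟨b0, b1, b2, hb0, hb1, hb2, hbsum, hbeq⟩ := (tri_mem_iff w0 w1 w2 q.2).1 (hT2 ▸ hyT2)
  have hedge1 : convexHull ℝ ({u0,u1} : Set E3) ⊆ T1 := by
    rw [hT1]; exact convexHull_mono (by intro z hz; simp only [mem_insert_iff, mem_singleton_iff] at hz ⊢; tauto)
  have hedge2 : convexHull ℝ ({u1,u2} : Set E3) ⊆ T1 := by
    rw [hT1]; exact convexHull_mono (by intro z hz; simp only [mem_insert_iff, mem_singleton_iff] at hz ⊢; tauto)
  have hedge3 : convexHull ℝ ({u0,u2} : Set E3) ⊆ T1 := by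
    rw [hT1]; exact convexHull_mono (by intro z hz; simp only [mem_insert_iff, mem_singleton_iff] at hz ⊢; tauto)
  have hwedge1 : convexHull ℝ ({w0,w1} : Set E3) ⊆ T2 := by
    rw [hT2]; exact convexHull_mono (by intro z hz; simp only [mem_insert_iff, mem_singleton_iff] at hz ⊢; tauto)
  have hwedge2 : convexHull ℝ ({w1,w2} : Set E3) ⊆ T2 := by
    rw [hT2]; exact convexHull_mono (by intro z hz; simp only [mem_insert_iff, mem_singleton_iff] at hz ⊢; tauto)
  have hwedge3 : convexHull ℝ ({w0,w2} : Set E3) ⊆ T2 := by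
    rw [hT2]; exact convexHull_mono (by intro z hz; simp only [mem_insert_iff, mem_singleton_iff] at hz ⊢; tauto)
  obtain ⟨hune1, hune2, hune3⟩ := vertex_ne u0 u1 u2 hu
  obtain ⟨hwne1, hwne2, hwne3⟩ := vertex_ne w0 w1 w2 hw
  have xcases : (q.1 ∈ ({u0,u1,u2} : Set E3)) ∨
      (0 < a0 ∧ 0 < a1 ∧ 0 < a2) ∨
      (∃ p1 p2 : E3, ∃ b c : ℝ, 0 < b ∧ 0 < c ∧ b + c = 1 ∧ q.1 = b•p1 + c•p2 ∧
        (q.1 ∈ convexHull ℝ {u0,u1} ∨ q.1 ∈ convexHull ℝ {u1,u2} ∨ q.1 ∈ convexHull ℝ {u0,u2}) ∧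
        p2 - p1 ≠ 0 ∧ convexHull ℝ ({p1,p2} : Set E3) ⊆ T1) := by
    rcases ha0.lt_or_eq with h0 | h0 <;> rcases ha1.lt_or_eq with h1 | h1 <;>
      rcases ha2.lt_or_eq with h2 | h2
    · exact Or.inr (Or.inl ⟨h0, h1, h2⟩)
    · -- a2 = 0 : edge {u0, u1}
      refine Or.inr (Or.inr ⟨u0, u1, a0, a1, h0, h1, by linarith, by rw [haeq, ← h2]; module,
        Or.inl ?_, sub_ne_zero.2 (Ne.symm hune1), hedge1⟩)
      rw [convexHull_pair]
      exact ⟨a0, a1, le_of_lt h0, le_of_lt h1, by linarith,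
        by rw [haeq, ← h2]; module⟩
    · -- a1 = 0 : edge {u0, u2}
      refine Or.inr (Or.inr ⟨u0, u2, a0, a2, h0, h2, by linarith, by rw [haeq, ← h1]; module,
        Or.inr (Or.inr ?_), sub_ne_zero.2 (Ne.symm hune3), hedge3⟩)
      rw [convexHull_pair]
      exact ⟨a0, a2, le_of_lt h0, le_of_lt h2, by linarith,
        by rw [haeq, ← h1]; module⟩
    · -- a1 = a2 = 0 : vertex u0
      have : q.1 = u0 := by
        rw [haeq, ← h1, ← h2, show a0 = 1 by linarith]; module
      exact Or.inl (by rw [this]; simp)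
    · -- a0 = 0 : edge {u1, u2}
      refine Or.inr (Or.inr ⟨u1, u2, a1, a2, h1, h2, by linarith, by rw [haeq, ← h0]; module,
        Or.inr (Or.inl ?_), sub_ne_zero.2 (Ne.symm hune2), hedge2⟩)
      rw [convexHull_pair]
      exact ⟨a1, a2, le_of_lt h1, le_of_lt h2, by linarith,
        by rw [haeq, ← h0]; module⟩
    · -- a0 = a2 = 0 : vertex u1
      have : q.1 = u1 := by
        rw [haeq, ← h0, ← h2, show a1 = 1 by linarith]; module
      exact Or.inl (by rw [this]; simp)
    · -- a0 = a1 = 0 : vertex u2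
      have : q.1 = u2 := by
        rw [haeq, ← h0, ← h1, show a2 = 1 by linarith]; module
      exact Or.inl (by rw [this]; simp)
    · exact absurd hasum (by rw [← h0, ← h1, ← h2]; norm_num)
  have ycases : (q.2 ∈ ({w0,w1,w2} : Set E3)) ∨
      (0 < b0 ∧ 0 < b1 ∧ 0 < b2) ∨
      (∃ p1 p2 : E3, ∃ b c : ℝ, 0 < b ∧ 0 < c ∧ b + c = 1 ∧ q.2 = b•p1 + c•p2 ∧
        (q.2 ∈ convexHull ℝ {w0,w1} ∨ q.2 ∈ convexHull ℝ {w1,w2} ∨ q.2 ∈ convexHull ℝ {w0,w2}) ∧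
        p2 - p1 ≠ 0 ∧ convexHull ℝ ({p1,p2} : Set E3) ⊆ T2) := by
    rcases hb0.lt_or_eq with h0 | h0 <;> rcases hb1.lt_or_eq with h1 | h1 <;>
      rcases hb2.lt_or_eq with h2 | h2
    · exact Or.inr (Or.inl ⟨h0, h1, h2⟩)
    · refine Or.inr (Or.inr ⟨w0, w1, b0, b1, h0, h1, by linarith, by rw [hbeq, ← h2]; module,
        Or.inl ?_, sub_ne_zero.2 (Ne.symm hwne1), hwedge1⟩)
      rw [convexHull_pair]
      exact ⟨b0, b1, le_of_lt h0, le_of_lt h1, by linarith,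
        by rw [hbeq, ← h2]; module⟩
    · refine Or.inr (Or.inr ⟨w0, w2, b0, b2, h0, h2, by linarith, by rw [hbeq, ← h1]; module,
        Or.inr (Or.inr ?_), sub_ne_zero.2 (Ne.symm hwne3), hwedge3⟩)
      rw [convexHull_pair]
      exact ⟨b0, b2, le_of_lt h0, le_of_lt h2, by linarith,
        by rw [hbeq, ← h1]; module⟩
    · have : q.2 = w0 := by
        rw [hbeq, ← h1, ← h2, show b0 = 1 by linarith]; module
      exact Or.inl (by rw [this]; simp)
    · refine Or.inr (Or.inr ⟨w1, w2, b1, b2, h1, h2, by linarith, by rw [hbeq, ← h0]; module,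
        Or.inr (Or.inl ?_), sub_ne_zero.2 (Ne.symm hwne2), hwedge2⟩)
      rw [convexHull_pair]
      exact ⟨b1, b2, le_of_lt h1, le_of_lt h2, by linarith,
        by rw [hbeq, ← h0]; module⟩
    · have : q.2 = w1 := by
        rw [hbeq, ← h0, ← h2, show b1 = 1 by linarith]; module
      exact Or.inl (by rw [this]; simp)
    · have : q.2 = w2 := by
        rw [hbeq, ← h0, ← h1, show b2 = 1 by linarith]; module
      exact Or.inl (by rw [this]; simp)
    · exact absurd hbsum (by rw [← h0, ← h1, ← h2]; norm_num)
  -- handle vertex cases first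
  rcases xcases with hxv | hx'
  · exact ⟨q.1, hxT1, q.2, hyT2, hdisteq, Or.inl (Or.inl hxv)⟩
  rcases ycases with hyv | hy'
  · exact ⟨q.1, hxT1, q.2, hyT2, hdisteq, Or.inl (Or.inr hyv)⟩
  -- interior perturbations for x (when applicable)
  rcases hx' with hxint | ⟨p1, p2, bb, cc, hbb, hcc, hbc, hxeq, hxedge, hpne, hpsub⟩
  · -- x is interior: span of u-directions is the orthogonal complement
    have hpert1 : ∀ s r : ℝ, ∀ v : E3, v = s•(u1-u0)+r•(u2-u0) →
        ∃ ε > 0, ∀ t : ℝ, |t| ≤ ε → q.1 + t•v ∈ T1 := by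
      intro s r v hv
      obtain ⟨ε, hε, h⟩ := tri_perturb u0 u1 u2 q.1 a0 a1 a2 hxint.1 hxint.2.1 hxint.2.2
        hasum haeq s r v hv
      exact ⟨ε, hε, fun t ht => hT1 ▸ h t ht⟩
    have ho1 : inner ℝ (u1 - u0) (q.1 - q.2) = (0:ℝ) :=
      orth1 _ (hpert1 1 0 (u1-u0) (by module))
    have ho2 : inner ℝ (u2 - u0) (q.1 - q.2) = (0:ℝ) :=
      orth1 _ (hpert1 0 1 (u2-u0) (by module))
    have hspanU : Submodule.span ℝ {u1-u0, u2-u0} = (ℝ ∙ (q.1-q.2))ᗮ :=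
      span_pair_eq_orth _ _ _ hd0 (li_of_affInd u0 u1 u2 hu) ho1 ho2
    rcases hy' with hyint | ⟨r1, r2, dd, ee, hdd, hee, hde, hyeq, hyedge, hrne, hrsub⟩
    · -- both interior
      have hpert2 : ∀ s r : ℝ, ∀ v : E3, v = s•(w1-w0)+r•(w2-w0) →
          ∃ ε > 0, ∀ t : ℝ, |t| ≤ ε → q.2 + t•v ∈ T2 := by
        intro s r v hv
        obtain ⟨ε, hε, h⟩ := tri_perturb w0 w1 w2 q.2 b0 b1 b2 hyint.1 hyint.2.1 hyint.2.2
          hbsum hbeq s r v hv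
        exact ⟨ε, hε, fun t ht => hT2 ▸ h t ht⟩
      have ho1' : inner ℝ (w1 - w0) (q.1 - q.2) = (0:ℝ) :=
        orth2 _ (hpert2 1 0 (w1-w0) (by module))
      have ho2' : inner ℝ (w2 - w0) (q.1 - q.2) = (0:ℝ) :=
        orth2 _ (hpert2 0 1 (w2-w0) (by module))
      have hspanW : Submodule.span ℝ {w1-w0, w2-w0} = (ℝ ∙ (q.1-q.2))ᗮ :=
        span_pair_eq_orth _ _ _ hd0 (li_of_affInd w0 w1 w2 hw) ho1' ho2'
      have hv0 : (u1 - u0) ∈ Submodule.span ℝ ({w1-w0, w2-w0} : Set E3) := by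
        rw [hspanW, ← hspanU]
        exact Submodule.subset_span (by simp)
      obtain ⟨s, r, hsr⟩ := Submodule.mem_span_pair.1 hv0
      exact absurd (key (u1-u0) (sub_ne_zero.2 (Ne.symm hune1))
        (hpert1 1 0 (u1-u0) (by module)) (hpert2 s r (u1-u0) hsr.symm)) id
    · -- x interior, y on edge
      have hyp : ∃ ε > 0, ∀ t : ℝ, |t| ≤ ε → q.2 + t•(r2-r1) ∈ T2 := by
        obtain ⟨ε, hε, h⟩ := seg_perturb r1 r2 q.2 dd ee hdd hee hde hyeq
        exact ⟨ε, hε, fun t ht => hrsub (h t ht)⟩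
      have hov : inner ℝ (r2 - r1) (q.1 - q.2) = (0:ℝ) := orth2 _ hyp
      have hv0 : (r2 - r1) ∈ Submodule.span ℝ ({u1-u0, u2-u0} : Set E3) := by
        rw [hspanU]
        exact (Submodule.mem_orthogonal_singleton_iff_inner_right).2
          (by rw [real_inner_comm]; exact hov)
      obtain ⟨s, r, hsr⟩ := Submodule.mem_span_pair.1 hv0
      exact absurd (key (r2-r1) hrne (hpert1 s r (r2-r1) hsr.symm) hyp) id
  · -- x on an edge
    rcases hy' with hyint | ⟨r1, r2, dd, ee, hdd, hee, hde, hyeq, hyedge, hrne, hrsub⟩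
    · -- x on edge, y interior
      have hpert2 : ∀ s r : ℝ, ∀ v : E3, v = s•(w1-w0)+r•(w2-w0) →
          ∃ ε > 0, ∀ t : ℝ, |t| ≤ ε → q.2 + t•v ∈ T2 := by
        intro s r v hv
        obtain ⟨ε, hε, h⟩ := tri_perturb w0 w1 w2 q.2 b0 b1 b2 hyint.1 hyint.2.1 hyint.2.2
          hbsum hbeq s r v hv
        exact ⟨ε, hε, fun t ht => hT2 ▸ h t ht⟩
      have ho1' : inner ℝ (w1 - w0) (q.1 - q.2) = (0:ℝ) :=
        orth2 _ (hpert2 1 0 (w1-w0) (by module))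
      have ho2' : inner ℝ (w2 - w0) (q.1 - q.2) = (0:ℝ) :=
        orth2 _ (hpert2 0 1 (w2-w0) (by module))
      have hspanW : Submodule.span ℝ {w1-w0, w2-w0} = (ℝ ∙ (q.1-q.2))ᗮ :=
        span_pair_eq_orth _ _ _ hd0 (li_of_affInd w0 w1 w2 hw) ho1' ho2'
      have hxp : ∃ ε > 0, ∀ t : ℝ, |t| ≤ ε → q.1 + t•(p2-p1) ∈ T1 := by
        obtain ⟨ε, hε, h⟩ := seg_perturb p1 p2 q.1 bb cc hbb hcc hbc hxeq
        exact ⟨ε, hε, fun t ht => hpsub (h t ht)⟩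
      have hov : inner ℝ (p2 - p1) (q.1 - q.2) = (0:ℝ) := orth1 _ hxp
      have hv0 : (p2 - p1) ∈ Submodule.span ℝ ({w1-w0, w2-w0} : Set E3) := by
        rw [hspanW]
        exact (Submodule.mem_orthogonal_singleton_iff_inner_right).2
          (by rw [real_inner_comm]; exact hov)
      obtain ⟨s, r, hsr⟩ := Submodule.mem_span_pair.1 hv0
      exact absurd (key (p2-p1) hpne hxp (hpert2 s r (p2-p1) hsr.symm)) id
    · -- both on edges: done
      exact ⟨q.1, hxT1, q.2, hyT2, hdisteq, Or.inr ⟨hxedge, hyedge⟩⟩
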